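/- arXiv:1311.0331 — 4 statements merged into one kernel-verified Lean document; each statement's English description precedes it below -/
import Mathlib

section
/- For every ordinal α, every strictly decreasing chain (X_β)_{β≤α} of subsets of ℕ (i.e. X_β ⊋ X_δ whenever β < δ ≤ α) is A-special for some A ∈ D_α(𝒫(ℕ)). -/
/-!
Take `U β = {Y | Y ⊈ X (β+1)}`, which is Scott open, and `A = D_α((U β)_{β<α})`.
If `X (β+1) ⊊ Y ⊆ X β` then `Y` lies in `U γ` exactly for `β ≤ γ < α`, so the least index of
a `U γ` containing `Y` is `β`, and `Y ∈ A` iff `β` and `α` have different parities. A subset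
of `X α` lies in no `U γ`, hence not in `A`. Taking `Y = X β` gives the alternation of the chain.
-/

open Topology

/-- The Scott topology on 𝒫(ℕ), generated by the basic open sets
`B_A = {X : A ⊆ X}` for finite `A ⊆ ℕ`. -/
def ScottPN : TopologicalSpace (Set ℕ) :=
  TopologicalSpace.generateFrom
    {O : Set (Set ℕ) | ∃ A : Set ℕ, A.Finite ∧ O = {X : Set ℕ | A ⊆ X}}

/-- An ordinal is even if its canonical decomposition `λ + n`
(`λ` zero or a limit, `n < ω`) has `n` even. -/
def OrdEven (o : Ordinal) : Prop :=
  ∃ (l : Ordinal) (n : ℕ), (l = 0 ∨ Order.IsSuccLimit l) ∧ o = l + 2 * n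

/-- Two ordinals have the same parity. -/
def SameParity (a b : Ordinal) : Prop := OrdEven a ↔ OrdEven b

/-- The Hausdorff difference operation `D_α`. -/
def DOp {E : Type*} (α : Ordinal) (U : Ordinal → Set E) : Set E :=
  ⋃ β ∈ {β : Ordinal | β < α ∧ ¬ SameParity β α}, (U β \ ⋃ γ ∈ Set.Iio β, U γ)

/-- Membership in the Hausdorff difference class `D_α(E)`. -/
def MemD {E : Type*} (t : TopologicalSpace E) (α : Ordinal) (A : Set E) : Prop :=
  ∃ U : Ordinal → Set E, (∀ β < α, IsOpen[t] (U β)) ∧ A = DOp α U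
/-- A decreasing `A`-alternating chain of length `α+1` in `𝒫(ℕ)`. -/
def AltChain (A : Set (Set ℕ)) (α : Ordinal) (X : Ordinal → Set ℕ) : Prop :=
  (∀ β δ : Ordinal, β < δ → δ ≤ α → X δ ⊂ X β) ∧
  (∀ β ≤ α, X β ∈ A ↔ ¬ SameParity β α)

/-- An `A`-special `(α+1)`-chain in `𝒫(ℕ)`. -/
def SpecialChain (A : Set (Set ℕ)) (α : Ordinal) (X : Ordinal → Set ℕ) : Prop :=
  AltChain A α X ∧
  (∀ β < α, ∀ Y : Set ℕ, Y ⊆ X β → X (β + 1) ⊂ Y → (Y ∈ A ↔ ¬ SameParity β α)) ∧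
  (∀ Y : Set ℕ, Y ⊆ X α → Y ∉ A)

lemma mem_DOp_iff {E : Type*} (α : Ordinal) (U : Ordinal → Set E) (Y : E) :
    Y ∈ DOp α U ↔ ∃ β, (β < α ∧ ¬ SameParity β α) ∧ Y ∈ U β ∧ ∀ γ < β, Y ∉ U γ := by
  simp only [DOp, Set.mem_iUnion, Set.mem_sdiff, Set.mem_ofPred_eq, Set.mem_Iio, exists_prop,
    not_exists, not_and]

lemma mem_DOp_iff_of_mem_iff_le {E : Type*} {α β : Ordinal} {U : Ordinal → Set E} {Y : E}
    (hβ : β < α) (hY : ∀ γ < α, Y ∈ U γ ↔ β ≤ γ) :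
    Y ∈ DOp α U ↔ ¬ SameParity β α := by
  rw [mem_DOp_iff]
  constructor
  · rintro ⟨δ, ⟨hδα, hpar⟩, hδ, hmin⟩
    obtain rfl | hβδ := ((hY δ hδα).1 hδ).eq_or_lt
    · exact hpar
    · exact absurd ((hY β hβ).2 le_rfl) (hmin β hβδ)
  · intro hpar
    exact ⟨β, ⟨hβ, hpar⟩, (hY β hβ).2 le_rfl,
      fun γ hγ hmem => (hγ.trans_le ((hY γ (hγ.trans hβ)).1 hmem)).false⟩

lemma notMem_DOp_of_forall_notMem {E : Type*} {α : Ordinal} {U : Ordinal → Set E} {Y : E}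
    (hY : ∀ β < α, Y ∉ U β) : Y ∉ DOp α U := by
  rw [mem_DOp_iff]
  rintro ⟨β, ⟨hβ, -⟩, hmem, -⟩
  exact hY β hβ hmem

lemma isOpen_scottPN_setOf_not_subset (S : Set ℕ) : IsOpen[ScottPN] {Y | ¬ Y ⊆ S} := by
  have hU : {Y | ¬ Y ⊆ S} = ⋃ n ∈ Sᶜ, {Y : Set ℕ | {n} ⊆ Y} := by
    ext Y
    simp only [Set.mem_ofPred_eq, Set.not_subset, Set.mem_iUnion, Set.mem_compl_iff,
      Set.singleton_subset_iff, exists_prop, and_comm]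
  rw [hU]
  exact @isOpen_biUnion _ _ ScottPN _ _ fun n _ =>
    TopologicalSpace.isOpen_generateFrom_of_mem ⟨{n}, Set.finite_singleton n, rfl⟩

section Chain

variable {α : Ordinal} {X : Ordinal → Set ℕ}

lemma chain_subset_of_le (hX : ∀ β δ : Ordinal, β < δ → δ ≤ α → X δ ⊂ X β)
    {β δ : Ordinal} (hβδ : β ≤ δ) (hδ : δ ≤ α) : X δ ⊆ X β := by
  obtain rfl | hβδ := hβδ.eq_or_lt
  · exact subset_rfl
  · exact (hX β δ hβδ hδ).subset

lemma not_subset_chain_succ_iff (hX : ∀ β δ : Ordinal, β < δ → δ ≤ α → X δ ⊂ X β)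
    {β γ : Ordinal} (hβ : β < α) (hγ : γ < α) {Y : Set ℕ} (hYβ : Y ⊆ X β)
    (hβY : X (β + 1) ⊂ Y) : ¬ Y ⊆ X (γ + 1) ↔ β ≤ γ := by
  constructor
  · intro hY
    by_contra! hγβ
    exact hY (hYβ.trans (chain_subset_of_le hX (Order.add_one_le_iff.2 hγβ) hβ.le))
  · intro hβγ hY
    have hsucc : X (γ + 1) ⊆ X (β + 1) :=
      chain_subset_of_le hX (add_le_add_left hβγ 1) (Order.add_one_le_iff.2 hγ)
    exact hβY.not_subset (hY.trans hsucc)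

end Chain

/-- Every strictly decreasing chain `(X_β)_{β ≤ α}` of subsets of `ℕ` is
`A`-special for some `A ∈ D_α(𝒫(ℕ))`. -/
theorem strict_decreasing_chain_is_special (α : Ordinal) (X : Ordinal → Set ℕ)
    (hX : ∀ β δ : Ordinal, β < δ → δ ≤ α → X δ ⊂ X β) :
    ∃ A : Set (Set ℕ), MemD ScottPN α A ∧ SpecialChain A α X := by
  set U : Ordinal → Set (Set ℕ) := fun β => {Y | ¬ Y ⊆ X (β + 1)}
  have hspecial : ∀ β < α, ∀ Y : Set ℕ, Y ⊆ X β → X (β + 1) ⊂ Y →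
      (Y ∈ DOp α U ↔ ¬ SameParity β α) := fun β hβ Y hYβ hβY =>
    mem_DOp_iff_of_mem_iff_le hβ fun γ hγ => not_subset_chain_succ_iff hX hβ hγ hYβ hβY
  have hbottom : ∀ Y : Set ℕ, Y ⊆ X α → Y ∉ DOp α U := fun Y hY =>
    notMem_DOp_of_forall_notMem fun β hβ hmem =>
      hmem (hY.trans (chain_subset_of_le hX (Order.add_one_le_iff.2 hβ) le_rfl))
  refine ⟨DOp α U, ⟨U, fun β _ => isOpen_scottPN_setOf_not_subset _, rfl⟩,
    ⟨hX, fun β hβ => ?_⟩, hspecial, hbottom⟩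
  obtain rfl | hβ := hβ.eq_or_lt
  · simpa [SameParity] using hbottom (X β) subset_rfl
  · exact hspecial β hβ (X β) subset_rfl (hX β (β + 1) (Order.lt_add_one_iff.2 le_rfl)
      (Order.add_one_le_iff.2 hβ))
end

section
/- Characterization of one-to-one Wadge hardness for Hausdorff difference classes in the Scott domain: for every H ⊆ 𝒫(ℕ) and every ordinal α with 1 ≤ α < ω₁, every member of D_α(𝒫(ℕ)) is of the form f⁻¹(H) for some injective continuous f : 𝒫(ℕ) → 𝒫(ℕ) if and only if there exists an H-scattered chain in 𝒫(ℕ) of length α+1. -/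
open Topology

/-- A chain `(X_β)_{β ≤ α}` in `𝒫(ℕ)` is scattered. -/
def Scattered (α : Ordinal) (X : Ordinal → Set ℕ) : Prop :=
  ∃ θ : Ordinal → Set ℕ → Set ℕ,
    (∀ β ≤ α, Continuous[ScottPN, ScottPN] (θ β) ∧ Function.Injective (θ β)) ∧
    (∀ Z : Set ℕ, θ α Z ⊆ X α) ∧
    (∀ β < α, ∀ Z : Set ℕ, X (β + 1) ⊂ θ β Z ∧ θ β Z ⊆ X β)

/-- A chain `(X_β)_{β ≤ α}` in `𝒫(ℕ)` is `A`-scattered. -/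
def AScattered (A : Set (Set ℕ)) (α : Ordinal) (X : Ordinal → Set ℕ) : Prop :=
  ∃ θ : Ordinal → Set ℕ → Set ℕ,
    (∀ β ≤ α, Continuous[ScottPN, ScottPN] (θ β) ∧ Function.Injective (θ β)) ∧
    (∀ Z : Set ℕ, θ α Z ⊆ X α) ∧
    (∀ β < α, ∀ Z : Set ℕ, X (β + 1) ⊂ θ β Z ∧ θ β Z ⊆ X β) ∧
    (∀ β ≤ α, ∀ Z : Set ℕ, θ β Z ∈ A ↔ ¬ SameParity β α)

/-!
Given an `H`-scattered chain with maps `θ_β`, a set `A = D_α((U_β))` reduces to `H` via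
`Z ↦ θ_{ρ(Z)}(Z)`, where `ρ(Z) ≤ α` is the least `β < α` with `Z ∈ U_β` (or `α` if there is none):
whether `θ_{ρ(Z)}(Z) ∈ H` is decided by the parity of `ρ(Z)` relative to `α`, and so is `Z ∈ A`.
Open sets are upward closed, so `ρ` is antitone; the chain separates the ranges of the `θ_β`, so
the glued map is monotone and injective; and it is Scott continuous because `ρ(Z)` is already
attained on a finite subset of `Z`.

Conversely, for countable `α` give each level `β ≤ α` its own column `r β` of `ℕ ≅ ℕ × ℕ`.
With `U_γ = {Z | (r γ, 0) ∈ Z}` the set `D_α(U)` carries a `D_α(U)`-scattered chain, and a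
one-to-one continuous reduction of `D_α(U)` to `H` maps it to an `H`-scattered chain.
-/

open Set Function

theorem isOpen_scottPN_iff {U : Set (Set ℕ)} :
    IsOpen[ScottPN] U ↔ ∀ Z ∈ U, ∃ F : Set ℕ, F.Finite ∧ F ⊆ Z ∧ ∀ Y, F ⊆ Y → Y ∈ U := by
  refine ⟨fun hU => ?_, fun h => ?_⟩
  · induction hU with
    | basic O hO =>
      obtain ⟨A, hA, rfl⟩ := hO
      exact fun Z hZ => ⟨A, hA, hZ, fun Y hY => hY⟩
    | univ => exact fun Z _ => ⟨∅, finite_empty, empty_subset Z, fun _ _ => trivial⟩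
    | inter O₁ O₂ _ _ ih₁ ih₂ =>
      rintro Z ⟨hZ₁, hZ₂⟩
      obtain ⟨F₁, hF₁, hF₁Z, hF₁O⟩ := ih₁ Z hZ₁
      obtain ⟨F₂, hF₂, hF₂Z, hF₂O⟩ := ih₂ Z hZ₂
      exact ⟨F₁ ∪ F₂, hF₁.union hF₂, union_subset hF₁Z hF₂Z, fun Y hY =>
        ⟨hF₁O Y (union_subset_iff.1 hY).1, hF₂O Y (union_subset_iff.1 hY).2⟩⟩
    | sUnion S _ ih =>
      rintro Z ⟨T, hT, hZT⟩
      obtain ⟨F, hF, hFZ, hFT⟩ := ih T hT Z hZT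
      exact ⟨F, hF, hFZ, fun Y hY => ⟨T, hT, hFT Y hY⟩⟩
  · let := ScottPN
    refine isOpen_iff_forall_mem_open.2 fun Z hZ => ?_
    obtain ⟨F, hF, hFZ, hFU⟩ := h Z hZ
    exact ⟨{Y | F ⊆ Y}, hFU, TopologicalSpace.GenerateOpen.basic _ ⟨F, hF, rfl⟩, hFZ⟩

theorem isUpperSet_of_isOpen_scottPN {U : Set (Set ℕ)} (hU : IsOpen[ScottPN] U) :
    IsUpperSet U := fun Z Y hZY hZ => by
  obtain ⟨F, -, hFZ, hFU⟩ := isOpen_scottPN_iff.1 hU Z hZ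
  exact hFU Y (hFZ.trans hZY)

theorem isOpen_scottPN_setOf_mem (n : ℕ) : IsOpen[ScottPN] {Z : Set ℕ | n ∈ Z} :=
  TopologicalSpace.GenerateOpen.basic _ ⟨{n}, finite_singleton n, by ext; simp⟩

theorem continuous_scottPN_iff {f : Set ℕ → Set ℕ} :
    Continuous[ScottPN, ScottPN] f ↔ ∀ n, IsOpen[ScottPN] {Z | n ∈ f Z} := by
  let := ScottPN
  refine ⟨fun hf n => hf.isOpen_preimage _ (isOpen_scottPN_setOf_mem n), fun h => ?_⟩
  refine continuous_generateFrom_iff.2 ?_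
  rintro _ ⟨A, hA, rfl⟩
  have hpre : f ⁻¹' {X | A ⊆ X} = ⋂ n ∈ A, {Z | n ∈ f Z} := by
    ext; simp [subset_def]
  rw [hpre]
  exact hA.isOpen_biInter fun n _ => h n

theorem monotone_of_continuous_scottPN {f : Set ℕ → Set ℕ}
    (hf : Continuous[ScottPN, ScottPN] f) : Monotone f := fun _ _ h _ hn =>
  isUpperSet_of_isOpen_scottPN (continuous_scottPN_iff.1 hf _) h hn

theorem strictMono_of_continuous_scottPN {f : Set ℕ → Set ℕ}
    (hf : Continuous[ScottPN, ScottPN] f) (hfi : Injective f) : StrictMono f :=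
  (monotone_of_continuous_scottPN hf).strictMono_of_injective hfi

theorem continuous_scottPN_union_image (C : Set ℕ) (g : ℕ → ℕ) :
    Continuous[ScottPN, ScottPN] fun Z => C ∪ g '' Z := by
  refine continuous_scottPN_iff.2 fun m => isOpen_scottPN_iff.2 ?_
  rintro Z (hm | ⟨n, hn, rfl⟩)
  · exact ⟨∅, finite_empty, empty_subset Z, fun _ _ => Or.inl hm⟩
  · exact ⟨{n}, finite_singleton n, singleton_subset_iff.2 hn,
      fun Y hY => Or.inr (mem_image_of_mem g (hY rfl))⟩

theorem injective_union_image {ι κ : Type*} {C : Set κ} {g : ι → κ} (hg : Injective g)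
    (hC : Disjoint C (range g)) : Injective fun Z => C ∪ g '' Z := by
  have hmem : ∀ Z n, g n ∈ C ∪ g '' Z ↔ n ∈ Z := fun Z n => by
    simp [hg.mem_set_image, hC.notMem_of_mem_right (mem_range_self n)]
  intro Z Z' (h : C ∪ g '' Z = C ∪ g '' Z')
  ext n
  rw [← hmem Z, ← hmem Z', h]

section Rank

variable {E : Type*} {α β : Ordinal} {U : Ordinal → Set E} {Z : E}

noncomputable def dRank (α : Ordinal) (U : Ordinal → Set E) (Z : E) : Ordinal :=
  sInf (insert α {β | β < α ∧ Z ∈ U β})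

theorem dRank_le : dRank α U Z ≤ α := csInf_le' (mem_insert _ _)

theorem dRank_le_of_mem (hβ : β < α) (hZ : Z ∈ U β) : dRank α U Z ≤ β :=
  csInf_le' (mem_insert_of_mem _ ⟨hβ, hZ⟩)

theorem mem_of_dRank_lt (h : dRank α U Z < α) : Z ∈ U (dRank α U Z) := by
  rcases csInf_mem (insert_nonempty α {β | β < α ∧ Z ∈ U β}) with h' | h'
  · exact absurd h' h.ne
  · exact h'.2

theorem dRank_eq_of (hβ : β ≤ α) (h : ∀ γ < α, Z ∈ U γ ↔ β ≤ γ) : dRank α U Z = β := by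
  refine le_antisymm ?_ (not_lt.1 fun hlt => ?_)
  · rcases hβ.lt_or_eq with hβ | rfl
    · exact dRank_le_of_mem hβ ((h β hβ).2 le_rfl)
    · exact dRank_le
  · have hlt' := hlt.trans_le hβ
    exact hlt.not_ge ((h _ hlt').1 (mem_of_dRank_lt hlt'))

theorem mem_DOp_iff_dRank : Z ∈ DOp α U ↔ ¬ SameParity (dRank α U Z) α := by
  simp only [DOp, mem_iUnion₂, mem_ofPred_eq, mem_sdiff, exists_prop, mem_Iio, not_exists, not_and]
  constructor
  · rintro ⟨β, ⟨hβα, hβ⟩, hZ, hmin⟩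
    convert hβ
    refine le_antisymm (dRank_le_of_mem hβα hZ) (not_lt.1 fun hlt => ?_)
    exact hmin _ hlt (mem_of_dRank_lt (hlt.trans hβα))
  · intro h
    have hlt : dRank α U Z < α := dRank_le.lt_of_ne fun heq => h (by rw [heq]; exact Iff.rfl)
    exact ⟨_, ⟨hlt, h⟩, mem_of_dRank_lt hlt, fun γ hγ hZ => hγ.not_ge (dRank_le_of_mem (hγ.trans hlt) hZ)⟩

theorem dRank_antitone [Preorder E] (hU : ∀ β < α, IsUpperSet (U β)) : Antitone (dRank α U) := by
  intro Z Z' h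
  rcases dRank_le.lt_or_eq with hlt | heq
  · exact dRank_le_of_mem hlt (hU _ hlt h (mem_of_dRank_lt hlt))
  · rw [heq]
    exact dRank_le

end Rank

section Glue

variable {α : Ordinal} {X : Ordinal → Set ℕ} {θ : Ordinal → Set ℕ → Set ℕ}
  {U : Ordinal → Set (Set ℕ)}

theorem ssubset_of_lt_of_scattered (hX : ∀ β δ : Ordinal, β < δ → δ ≤ α → X δ ⊂ X β)
    (hθα : ∀ Z, θ α Z ⊆ X α) (hθ : ∀ β < α, ∀ Z, X (β + 1) ⊂ θ β Z ∧ θ β Z ⊆ X β)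
    {β δ : Ordinal} (hβδ : β < δ) (hδ : δ ≤ α) (Z Z' : Set ℕ) : θ δ Z' ⊂ θ β Z := by
  have hθδ : θ δ Z' ⊆ X δ := by
    rcases hδ.lt_or_eq with h | rfl
    exacts [(hθ δ h Z').2, hθα Z']
  have hXδ : X δ ⊆ X (β + 1) := by
    rcases (Order.add_one_le_of_lt hβδ).lt_or_eq with h | h
    · exact (hX _ _ h hδ).subset
    · rw [h]
  exact (hθδ.trans hXδ).trans_ssubset (hθ β (hβδ.trans_le hδ) Z).1

noncomputable def glueByRank (α : Ordinal) (U : Ordinal → Set (Set ℕ))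
    (θ : Ordinal → Set ℕ → Set ℕ) (Z : Set ℕ) : Set ℕ :=
  θ (dRank α U Z) Z

theorem glueByRank_monotone (hU : ∀ β < α, IsUpperSet (U β)) (hθm : ∀ β ≤ α, Monotone (θ β))
    (hX : ∀ β δ : Ordinal, β < δ → δ ≤ α → X δ ⊂ X β)
    (hθα : ∀ Z, θ α Z ⊆ X α) (hθ : ∀ β < α, ∀ Z, X (β + 1) ⊂ θ β Z ∧ θ β Z ⊆ X β) :
    Monotone (glueByRank α U θ) := by
  intro Z Z' h
  rcases (dRank_antitone hU h).lt_or_eq with hlt | heq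
  · exact (ssubset_of_lt_of_scattered hX hθα hθ hlt dRank_le Z' Z).subset
  · change θ _ Z ⊆ θ _ Z'
    rw [heq]
    exact hθm _ dRank_le h

theorem glueByRank_injective (hθi : ∀ β ≤ α, Injective (θ β))
    (hX : ∀ β δ : Ordinal, β < δ → δ ≤ α → X δ ⊂ X β)
    (hθα : ∀ Z, θ α Z ⊆ X α) (hθ : ∀ β < α, ∀ Z, X (β + 1) ⊂ θ β Z ∧ θ β Z ⊆ X β) :
    Injective (glueByRank α U θ) := by
  intro Z Z' (h : θ _ Z = θ _ Z')
  rcases lt_trichotomy (dRank α U Z) (dRank α U Z') with hlt | heq | hlt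
  · exact absurd h (ssubset_of_lt_of_scattered hX hθα hθ hlt dRank_le Z Z').ne'
  · rw [heq] at h
    exact hθi _ dRank_le h
  · exact absurd h (ssubset_of_lt_of_scattered hX hθα hθ hlt dRank_le Z' Z).ne

theorem exists_finite_subset_dRank_eq (hU : ∀ β < α, IsOpen[ScottPN] (U β)) (Z : Set ℕ) :
    ∃ F : Set ℕ, F.Finite ∧ F ⊆ Z ∧ ∀ Y, F ⊆ Y → Y ⊆ Z → dRank α U Y = dRank α U Z := by
  have hanti := dRank_antitone fun β hβ => isUpperSet_of_isOpen_scottPN (hU β hβ)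
  obtain ⟨F, hF, hFZ, hrank⟩ : ∃ F : Set ℕ, F.Finite ∧ F ⊆ Z ∧ dRank α U F ≤ dRank α U Z := by
    rcases dRank_le.lt_or_eq with hlt | heq
    · obtain ⟨F, hF, hFZ, hFU⟩ := isOpen_scottPN_iff.1 (hU _ hlt) Z (mem_of_dRank_lt hlt)
      exact ⟨F, hF, hFZ, dRank_le_of_mem hlt (hFU F subset_rfl)⟩
    · refine ⟨∅, finite_empty, empty_subset Z, ?_⟩
      rw [heq]
      exact dRank_le
  exact ⟨F, hF, hFZ, fun Y hFY hYZ => le_antisymm ((hanti hFY).trans hrank) (hanti hYZ)⟩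

theorem glueByRank_continuous (hU : ∀ β < α, IsOpen[ScottPN] (U β))
    (hθc : ∀ β ≤ α, Continuous[ScottPN, ScottPN] (θ β))
    (hX : ∀ β δ : Ordinal, β < δ → δ ≤ α → X δ ⊂ X β)
    (hθα : ∀ Z, θ α Z ⊆ X α) (hθ : ∀ β < α, ∀ Z, X (β + 1) ⊂ θ β Z ∧ θ β Z ⊆ X β) :
    Continuous[ScottPN, ScottPN] (glueByRank α U θ) := by
  have hmono := glueByRank_monotone (fun β hβ => isUpperSet_of_isOpen_scottPN (hU β hβ))
    (fun β hβ => monotone_of_continuous_scottPN (hθc β hβ)) hX hθα hθ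
  refine continuous_scottPN_iff.2 fun n => isOpen_scottPN_iff.2 fun Z hn => ?_
  obtain ⟨F₁, hF₁, hF₁Z, hθF₁⟩ :=
    isOpen_scottPN_iff.1 (continuous_scottPN_iff.1 (hθc _ dRank_le) n) Z hn
  obtain ⟨F₂, hF₂, hF₂Z, hrank⟩ := exists_finite_subset_dRank_eq hU Z
  have hFZ : F₁ ∪ F₂ ⊆ Z := union_subset hF₁Z hF₂Z
  refine ⟨F₁ ∪ F₂, hF₁.union hF₂, hFZ, fun Y hY => hmono hY ?_⟩
  change n ∈ θ _ _
  rw [hrank _ subset_union_right hFZ]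
  exact hθF₁ _ subset_union_left

theorem glueByRank_preimage {H : Set (Set ℕ)} (hH : ∀ β ≤ α, ∀ Z, θ β Z ∈ H ↔ ¬ SameParity β α) :
    glueByRank α U θ ⁻¹' H = DOp α U := by
  ext Z
  exact (hH _ dRank_le Z).trans mem_DOp_iff_dRank.symm

end Glue

theorem AScattered.map {H : Set (Set ℕ)} {α : Ordinal} {X : Ordinal → Set ℕ} {f : Set ℕ → Set ℕ}
    (hf : Continuous[ScottPN, ScottPN] f) (hfi : Injective f) (h : AScattered (f ⁻¹' H) α X) :
    AScattered H α fun β => f (X β) := by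
  obtain ⟨θ, hθ, hθα, hθβ, hθH⟩ := h
  have hfs := strictMono_of_continuous_scottPN hf hfi
  exact ⟨fun β => f ∘ θ β,
    fun β hβ => ⟨@Continuous.comp _ _ _ ScottPN ScottPN ScottPN _ _ hf (hθ β hβ).1,
      hfi.comp (hθ β hβ).2⟩,
    fun Z => hfs.monotone (hθα Z),
    fun β hβ Z => ⟨hfs (hθβ β hβ Z).1, hfs.monotone (hθβ β hβ Z).2⟩, hθH⟩

section Columns

variable {α β γ δ : Ordinal} {r : Ordinal → ℕ}

-- `Nat.pair c j` is the `j`-th entry of column `c`; level `β` owns column `r β`.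
def columnsFrom (r : Ordinal → ℕ) (β : Ordinal) : Set ℕ :=
  {m | ∀ γ < β, m.unpair.1 ≠ r γ}

def headIn (r : Ordinal → ℕ) (γ : Ordinal) : Set (Set ℕ) :=
  {Z | Nat.pair (r γ) 0 ∈ Z}

def levelEmbed (r : Ordinal → ℕ) (β : Ordinal) (Z : Set ℕ) : Set ℕ :=
  insert (Nat.pair (r β) 0) (columnsFrom r (β + 1)) ∪ (fun n => Nat.pair (r β) (n + 1)) '' Z

theorem pair_mem_columnsFrom_iff (hr : InjOn r (Iic α)) (hγ : γ ≤ α) (j : ℕ) :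
    Nat.pair (r γ) j ∈ columnsFrom r β ↔ β ≤ γ := by
  simp only [columnsFrom, mem_ofPred_eq, Nat.unpair_pair]
  exact ⟨fun h => not_lt.1 fun hγβ => h γ hγβ rfl,
    fun hβγ δ hδ hrδ => (hδ.trans_le hβγ).ne' (hr hγ ((hδ.trans_le hβγ).le.trans hγ) hrδ)⟩

theorem columnsFrom_antitone : Antitone (columnsFrom r) := fun _ _ h _ hm γ hγ =>
  hm γ (hγ.trans_le h)

theorem columnsFrom_ssubset (hr : InjOn r (Iic α)) (hβδ : β < δ) (hδ : δ ≤ α) :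
    columnsFrom r δ ⊂ columnsFrom r β := by
  refine (ssubset_iff_of_subset (columnsFrom_antitone hβδ.le)).2 ⟨Nat.pair (r β) 0, ?_, ?_⟩
  · exact (pair_mem_columnsFrom_iff hr (hβδ.le.trans hδ) 0).2 le_rfl
  · rw [pair_mem_columnsFrom_iff hr (hβδ.le.trans hδ)]
    exact hβδ.not_ge

theorem continuous_levelEmbed : Continuous[ScottPN, ScottPN] (levelEmbed r β) :=
  continuous_scottPN_union_image _ _

theorem injective_levelEmbed : Injective (levelEmbed r β) := by
  refine injective_union_image (fun m n h => by simpa using h) ?_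
  rw [disjoint_right]
  rintro _ ⟨n, rfl⟩ (h | h)
  · simp at h
  · exact h β (Order.lt_add_one_iff.2 le_rfl) (Nat.unpair_pair _ _ ▸ rfl)

theorem columnsFrom_succ_ssubset_levelEmbed (Z : Set ℕ) :
    columnsFrom r (β + 1) ⊂ levelEmbed r β Z := by
  refine (ssubset_iff_of_subset fun m hm => Or.inl (Or.inr hm)).2
    ⟨_, Or.inl (mem_insert _ _), fun h => ?_⟩
  exact h β (Order.lt_add_one_iff.2 le_rfl) (Nat.unpair_pair _ _ ▸ rfl)

theorem levelEmbed_subset_columnsFrom (hr : InjOn r (Iic α)) (hβ : β ≤ α) (Z : Set ℕ) :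
    levelEmbed r β Z ⊆ columnsFrom r β := by
  rintro _ ((rfl | h) | ⟨n, -, rfl⟩)
  · exact (pair_mem_columnsFrom_iff hr hβ 0).2 le_rfl
  · exact columnsFrom_antitone (Order.lt_add_one_iff.2 le_rfl).le h
  · exact (pair_mem_columnsFrom_iff hr hβ _).2 le_rfl

theorem levelEmbed_mem_headIn_iff (hr : InjOn r (Iic α)) (hβ : β ≤ α) (hγ : γ ≤ α)
    (Z : Set ℕ) : levelEmbed r β Z ∈ headIn r γ ↔ β ≤ γ := by
  simp only [headIn, levelEmbed, mem_ofPred_eq, mem_union, mem_insert_iff, mem_image,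
    Nat.pair_eq_pair, pair_mem_columnsFrom_iff hr hγ, Order.add_one_le_iff, hr.eq_iff hγ hβ]
  simp [le_iff_lt_or_eq, eq_comm, or_comm]

theorem dRank_levelEmbed (hr : InjOn r (Iic α)) (hβ : β ≤ α) (Z : Set ℕ) :
    dRank α (headIn r) (levelEmbed r β Z) = β :=
  dRank_eq_of hβ fun _ hγ => levelEmbed_mem_headIn_iff hr hβ hγ.le Z

theorem aScattered_DOp_headIn_columnsFrom (hr : InjOn r (Iic α)) :
    AScattered (DOp α (headIn r)) α (columnsFrom r) :=
  ⟨levelEmbed r, fun _ _ => ⟨continuous_levelEmbed, injective_levelEmbed⟩,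
    levelEmbed_subset_columnsFrom hr le_rfl,
    fun _ hβ Z => ⟨columnsFrom_succ_ssubset_levelEmbed Z, levelEmbed_subset_columnsFrom hr hβ.le Z⟩,
    fun _ hβ Z => by rw [mem_DOp_iff_dRank, dRank_levelEmbed hr hβ]⟩

end Columns

theorem Ordinal.countable_Iic_of_card_le_aleph0 {α : Ordinal} (h : α.card ≤ Cardinal.aleph0) :
    (Iic α).Countable := by
  rw [← Order.Iio_succ, Order.succ_eq_add_one, ← Cardinal.le_aleph0_iff_set_countable,
    Cardinal.mk_Iio_ordinal, Ordinal.card_add_one, Cardinal.lift_le_aleph0]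
  exact Cardinal.add_le_aleph0.2 ⟨h, Cardinal.one_le_aleph0⟩

theorem one_one_wadge_hard_iff_scattered_chain_general (H : Set (Set ℕ))
    (α : Ordinal) (h2 : α.card ≤ Cardinal.aleph0) :
    (∀ A : Set (Set ℕ), MemD ScottPN α A →
        ∃ f : Set ℕ → Set ℕ, Continuous[ScottPN, ScottPN] f ∧
          Function.Injective f ∧ A = f ⁻¹' H) ↔
      ∃ X : Ordinal → Set ℕ,
        (∀ β δ : Ordinal, β < δ → δ ≤ α → X δ ⊂ X β) ∧ AScattered H α X := by
  constructor
  · intro hhard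
    obtain ⟨r, hr⟩ := countable_iff_exists_injOn.1 (Ordinal.countable_Iic_of_card_le_aleph0 h2)
    obtain ⟨f, hf, hfi, hfH⟩ :=
      hhard _ ⟨headIn r, fun _ _ => isOpen_scottPN_setOf_mem _, rfl⟩
    have hscat := aScattered_DOp_headIn_columnsFrom hr
    rw [hfH] at hscat
    exact ⟨_, fun β δ hβδ hδ => strictMono_of_continuous_scottPN hf hfi
      (columnsFrom_ssubset hr hβδ hδ), hscat.map hf hfi⟩
  · rintro ⟨X, hX, θ, hθ, hθα, hθβ, hθH⟩ A ⟨U, hU, rfl⟩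
    exact ⟨glueByRank α U θ,
      glueByRank_continuous hU (fun β hβ => (hθ β hβ).1) hX hθα hθβ,
      glueByRank_injective (fun β hβ => (hθ β hβ).2) hX hθα hθβ,
      (glueByRank_preimage hθH).symm⟩

/-- One-to-one Wadge hardness for `D_α(𝒫(ℕ))` is characterized by the
existence of an `H`-scattered chain of length `α+1`. -/
theorem one_one_wadge_hard_iff_scattered_chain (H : Set (Set ℕ))
    (α : Ordinal) (h1 : 1 ≤ α) (h2 : α.card ≤ Cardinal.aleph0) :
    (∀ A : Set (Set ℕ), MemD ScottPN α A →
        ∃ f : Set ℕ → Set ℕ, Continuous[ScottPN, ScottPN] f ∧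
          Function.Injective f ∧ A = f ⁻¹' H) ↔
      ∃ X : Ordinal → Set ℕ,
        (∀ β δ : Ordinal, β < δ → δ ≤ α → X δ ⊂ X β) ∧ AScattered H α X :=
  one_one_wadge_hard_iff_scattered_chain_general H α h2
end

section
/- For every ordinal α with 1 ≤ α < ω₁ there exists a one-to-one Wadge complete set for D_α(𝒫(ℕ)): a family H ∈ D_α(𝒫(ℕ)) such that every member of D_α(𝒫(ℕ)) is of the form f⁻¹(H) for some injective continuous f : 𝒫(ℕ) → 𝒫(ℕ). -/
open Topology

/-!
A countable family of Scott-open sets `W i` is universal: since a Scott-open set is the union of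
the basic sets `B_F` (`F` finite) it contains, the map `X ↦ X' ∪ C_U`, where `X'` is a copy of `X`
and `C_U` codes the pairs `(i, F)` with `B_F ⊆ U i`, is a continuous injection pulling each `W i`
back to `U i`, provided `W i` consists of the sets containing the code of some `(i, F)` together
with the copy of `F`. Preimages commute with the difference operation, so for `α` countable the
set `D_α(W)` is one-to-one Wadge complete for `D_α`.
-/

open Function Set

lemma isOpen_setOf_subset {A : Set ℕ} (hA : A.Finite) : IsOpen[ScottPN] {X | A ⊆ X} :=
  TopologicalSpace.GenerateOpen.basic _ ⟨A, hA, rfl⟩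

lemma exists_finset_subset_of_isOpen {U : Set (Set ℕ)} (hU : IsOpen[ScottPN] U) :
    ∀ X ∈ U, ∃ F : Finset ℕ, ↑F ⊆ X ∧ {Y : Set ℕ | ↑F ⊆ Y} ⊆ U := by
  induction hU with
  | basic O hO =>
      rintro X hX
      obtain ⟨A, hA, rfl⟩ := hO
      exact ⟨hA.toFinset, by simpa using hX, fun Y hY => by simpa using hY⟩
  | univ => exact fun _ _ => ⟨∅, by simp, subset_univ _⟩
  | inter U V _ _ ihU ihV =>
      rintro X ⟨hXU, hXV⟩
      obtain ⟨F, hFX, hFU⟩ := ihU X hXU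
      obtain ⟨G, hGX, hGV⟩ := ihV X hXV
      refine ⟨F ∪ G, by simpa using ⟨hFX, hGX⟩, fun Y hY => ?_⟩
      rw [mem_ofPred_eq, Finset.coe_union, union_subset_iff] at hY
      exact ⟨hFU hY.1, hGV hY.2⟩
  | sUnion S _ ih =>
      rintro X ⟨V, hV, hXV⟩
      obtain ⟨F, hFX, hFV⟩ := ih V hV X hXV
      exact ⟨F, hFX, fun Y hY => ⟨V, hV, hFV hY⟩⟩

lemma mem_iff_exists_finset_of_isOpen {U : Set (Set ℕ)} (hU : IsOpen[ScottPN] U) (X : Set ℕ) :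
    X ∈ U ↔ ∃ F : Finset ℕ, {Y : Set ℕ | ↑F ⊆ Y} ⊆ U ∧ ↑F ⊆ X := by
  refine ⟨fun hX => ?_, fun ⟨F, hFU, hFX⟩ => hFU hFX⟩
  obtain ⟨F, hFX, hFU⟩ := exists_finset_subset_of_isOpen hU X hX
  exact ⟨F, hFU, hFX⟩

lemma preimage_image_union {α β : Type*} {φ : α → β} (hφ : Injective φ) {C : Set β}
    (hC : Disjoint (range φ) C) (X : Set α) : φ ⁻¹' (φ '' X ∪ C) = X := by
  rw [preimage_union, hφ.preimage_image, preimage_eq_empty_iff.2 hC.symm, union_empty]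

lemma injective_image_union {α β : Type*} {φ : α → β} (hφ : Injective φ) {C : Set β}
    (hC : Disjoint (range φ) C) : Injective (fun X => φ '' X ∪ C) :=
  fun X Y hXY => by
    rw [← preimage_image_union hφ hC X, ← preimage_image_union hφ hC Y]
    exact congrArg (φ ⁻¹' ·) hXY

lemma continuous_image_union {φ : ℕ → ℕ} (hφ : Injective φ) (C : Set ℕ) :
    Continuous[ScottPN, ScottPN] (fun X => φ '' X ∪ C) := by
  rw [ScottPN, continuous_generateFrom_iff]
  rintro _ ⟨A, hA, rfl⟩
  have hpre : (fun X => φ '' X ∪ C) ⁻¹' {Y | A ⊆ Y} = {X | A \ C ⊆ φ '' X} := by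
    ext X
    simp only [mem_preimage, mem_ofPred_eq, sdiff_subset_iff, union_comm C]
  rw [hpre]
  by_cases hAC : A \ C ⊆ range φ
  · have hsub : ∀ X, A \ C ⊆ φ '' X ↔ φ ⁻¹' (A \ C) ⊆ X := fun X => by
      rw [← image_subset_image_iff hφ (s := φ ⁻¹' (A \ C)), image_preimage_eq_of_subset hAC]
    simp only [hsub]
    exact isOpen_setOf_subset (hA.sdiff.preimage hφ.injOn)
  · have hempty : {X | A \ C ⊆ φ '' X} = ∅ :=
      eq_empty_of_forall_notMem fun X hX => hAC (hX.trans (image_subset_range φ X))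
    rw [hempty]
    exact @isOpen_empty _ ScottPN

section UniversalFamily

variable {ι : Type*} (e : ℕ ⊕ (ι × Finset ℕ) → ℕ)

/-- `X` is copied along `e ∘ inl`; the pair `(i, F)` is coded by `e (inr (i, F))`. -/
def universalOpen (i : ι) : Set (Set ℕ) :=
  ⋃ F : Finset ℕ, {Z | insert (e (.inr (i, F))) (e ∘ .inl '' ↑F) ⊆ Z}

def universalReduction (U : ι → Set (Set ℕ)) (X : Set ℕ) : Set ℕ :=
  e ∘ .inl '' X ∪ e ∘ .inr '' {p | {Y : Set ℕ | ↑p.2 ⊆ Y} ⊆ U p.1}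

lemma isOpen_universalOpen (i : ι) : IsOpen[ScottPN] (universalOpen e i) :=
  @isOpen_iUnion _ _ ScottPN _ fun F =>
    isOpen_setOf_subset ((F.finite_toSet.image _).insert _)

variable {e} (he : Injective e)
include he

lemma disjoint_range_comp_inl_inr :
    Disjoint (range (e ∘ Sum.inl)) (range (e ∘ Sum.inr)) :=
  disjoint_range_iff.2 fun _ _ h => Sum.inl_ne_inr (he h)

lemma universalReduction_mem_universalOpen_iff {U : ι → Set (Set ℕ)}
    (hU : ∀ i, IsOpen[ScottPN] (U i)) (X : Set ℕ) (i : ι) :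
    universalReduction e U X ∈ universalOpen e i ↔ X ∈ U i := by
  have hdisj := disjoint_range_comp_inl_inr he
  have hcopy : e ∘ Sum.inl ⁻¹' universalReduction e U X = X :=
    preimage_image_union (he.comp Sum.inl_injective)
      (hdisj.mono_right (image_subset_range _ _)) X
  have hcode : e ∘ Sum.inr ⁻¹' universalReduction e U X =
      {p | {Y : Set ℕ | ↑p.2 ⊆ Y} ⊆ U p.1} := by
    rw [universalReduction, union_comm]
    exact preimage_image_union (he.comp Sum.inr_injective)
      (hdisj.symm.mono_right (image_subset_range (e ∘ Sum.inl) X)) _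
  simp only [universalOpen, mem_iUnion, mem_ofPred_eq, insert_subset_iff, image_subset_iff]
  rw [mem_iff_exists_finset_of_isOpen (hU i)]
  exact exists_congr fun F => and_congr (Set.ext_iff.1 hcode (i, F)) (by rw [hcopy])

end UniversalFamily

lemma exists_universal_open_family (ι : Type*) [Countable ι] :
    ∃ W : ι → Set (Set ℕ), (∀ i, IsOpen[ScottPN] (W i)) ∧
      ∀ U : ι → Set (Set ℕ), (∀ i, IsOpen[ScottPN] (U i)) →
        ∃ f : Set ℕ → Set ℕ, Continuous[ScottPN, ScottPN] f ∧ Injective f ∧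
          ∀ i, f ⁻¹' W i = U i := by
  obtain ⟨e, he⟩ := exists_injective_nat (ℕ ⊕ (ι × Finset ℕ))
  refine ⟨universalOpen e, isOpen_universalOpen e, fun U hU => ⟨universalReduction e U,
    continuous_image_union (he.comp Sum.inl_injective) _,
    injective_image_union (he.comp Sum.inl_injective)
      ((disjoint_range_comp_inl_inr he).mono_right (image_subset_range _ _)),
    fun i => ?_⟩⟩
  ext X
  exact universalReduction_mem_universalOpen_iff he hU X i

lemma preimage_DOp {E F : Type*} (f : E → F) (α : Ordinal) (V : Ordinal → Set F) :
    f ⁻¹' DOp α V = DOp α (fun β => f ⁻¹' V β) := by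
  simp only [DOp, preimage_iUnion, preimage_sdiff]

lemma DOp_congr {E : Type*} {α : Ordinal} {U V : Ordinal → Set E} (h : ∀ β < α, U β = V β) :
    DOp α U = DOp α V := by
  unfold DOp
  refine iUnion₂_congr fun β hβ => ?_
  rw [h β hβ.1, iUnion₂_congr fun γ (hγ : γ ∈ Iio β) => h γ (lt_trans hγ hβ.1)]

theorem exists_one_one_wadge_complete_for_D_general
    (α : Ordinal) (h2 : α.card ≤ Cardinal.aleph0) :
    ∃ H : Set (Set ℕ), MemD ScottPN α H ∧
      ∀ A : Set (Set ℕ), MemD ScottPN α A →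
        ∃ f : Set ℕ → Set ℕ, Continuous[ScottPN, ScottPN] f ∧
          Function.Injective f ∧ A = f ⁻¹' H := by
  have : Countable (Iio α) := by
    rw [← Cardinal.mk_le_aleph0_iff, Cardinal.mk_Iio_ordinal]
    exact Cardinal.lift_le_aleph0.2 h2
  obtain ⟨W, hWopen, hWuniv⟩ := exists_universal_open_family (Iio α)
  let W' : Ordinal → Set (Set ℕ) := fun β => if h : β < α then W ⟨β, h⟩ else ∅
  refine ⟨DOp α W', ⟨W', fun β hβ => by simpa [W', hβ] using hWopen ⟨β, hβ⟩, rfl⟩, ?_⟩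
  rintro A ⟨U, hUopen, rfl⟩
  obtain ⟨f, hf, hfinj, hfW⟩ := hWuniv (fun β => U β) fun β => hUopen β β.2
  refine ⟨f, hf, hfinj, ?_⟩
  rw [preimage_DOp]
  exact DOp_congr fun β hβ => by simpa [W', hβ] using (hfW ⟨β, hβ⟩).symm

/-- For every countable ordinal `α ≥ 1` there exists a one-to-one Wadge
complete set for `D_α(𝒫(ℕ))`. -/
theorem exists_one_one_wadge_complete_for_D
    (α : Ordinal) (h1 : 1 ≤ α) (h2 : α.card ≤ Cardinal.aleph0) :
    ∃ H : Set (Set ℕ), MemD ScottPN α H ∧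
      ∀ A : Set (Set ℕ), MemD ScottPN α A →
        ∃ f : Set ℕ → Set ℕ, Continuous[ScottPN, ScottPN] f ∧
          Function.Injective f ∧ A = f ⁻¹' H :=
  exists_one_one_wadge_complete_for_D_general α h2
end

section
/- The family 𝒫_{<ω}(ℕ) of all finite subsets of ℕ belongs to Σ⁰₂(𝒫(ℕ)) but not to Π⁰₂(𝒫(ℕ)); equivalently, the family of infinite subsets of ℕ is not in Σ⁰₂(𝒫(ℕ)). -/
open Topology

/-- Membership in `Σ⁰₂(E)`: countable unions of differences of open sets. -/
def MemSigma2 {E : Type*} (t : TopologicalSpace E) (A : Set E) : Prop :=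
  ∃ U V : ℕ → Set E, (∀ n, IsOpen[t] (U n)) ∧ (∀ n, IsOpen[t] (V n)) ∧
    A = ⋃ n, U n \ V n

/-!
Scott-open families of subsets of `ℕ` are upward closed, and each of their members contains a
finite member. Hence if `univ` lies in a difference `U \ V` of open families, then so does some
finite set: `U` contains a finite `F ⊆ univ`, and `F ∈ V` would force `univ ∈ V`. So no `Σ⁰₂`
family contains `univ` without containing a finite set, which rules out the infinite sets.
Conversely, the finite sets are the countable union over finite `F` of `B_F \ {X | ¬ X ⊆ F}`,
whose pieces are the singletons `{F}`.
-/

namespace ScottPN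

lemma isOpen_setOf_subset {A : Set ℕ} (hA : A.Finite) : IsOpen[ScottPN] {X | A ⊆ X} :=
  .basic _ ⟨A, hA, rfl⟩

lemma isOpen_setOf_not_subset (F : Set ℕ) : IsOpen[ScottPN] {X | ¬ X ⊆ F} := by
  have hunion : {X : Set ℕ | ¬ X ⊆ F} = ⋃ a ∈ Fᶜ, {X | {a} ⊆ X} := by
    ext X
    simp only [Set.mem_ofPred_eq, Set.mem_iUnion, Set.mem_compl_iff, Set.singleton_subset_iff,
      Set.not_subset, exists_prop]
    exact exists_congr fun _ => and_comm
  rw [hunion]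
  exact @isOpen_biUnion _ _ ScottPN _ _ fun a _ => isOpen_setOf_subset (Set.finite_singleton a)

lemma isUpperSet_of_isOpen {O : Set (Set ℕ)} (hO : IsOpen[ScottPN] O) : IsUpperSet O := by
  induction hO with
  | basic s hs =>
    obtain ⟨A, -, rfl⟩ := hs
    exact fun _ _ hXY hX => hX.trans hXY
  | univ => exact isUpperSet_univ
  | inter s t _ _ hs ht => exact hs.inter ht
  | sUnion S _ hS => exact isUpperSet_sUnion hS

lemma exists_finite_subset_mem_of_isOpen {O : Set (Set ℕ)} (hO : IsOpen[ScottPN] O)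
    {X : Set ℕ} (hX : X ∈ O) : ∃ F ⊆ X, F.Finite ∧ F ∈ O := by
  induction hO generalizing X with
  | basic s hs =>
    obtain ⟨A, hA, rfl⟩ := hs
    exact ⟨A, hX, hA, (subset_rfl : A ⊆ A)⟩
  | univ => exact ⟨∅, Set.empty_subset X, Set.finite_empty, trivial⟩
  | inter s t hs ht ihs iht =>
    obtain ⟨F, hFX, hF, hFs⟩ := ihs hX.1
    obtain ⟨G, hGX, hG, hGt⟩ := iht hX.2
    exact ⟨F ∪ G, Set.union_subset hFX hGX, hF.union hG,
      isUpperSet_of_isOpen hs Set.subset_union_left hFs,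
      isUpperSet_of_isOpen ht Set.subset_union_right hGt⟩
  | sUnion S _ ih =>
    obtain ⟨s, hs, hXs⟩ := hX
    obtain ⟨F, hFX, hF, hFs⟩ := ih s hs hXs
    exact ⟨F, hFX, hF, s, hs, hFs⟩

lemma exists_finite_mem_of_memSigma2 {A : Set (Set ℕ)} (hA : MemSigma2 ScottPN A)
    (huniv : Set.univ ∈ A) : ∃ F ∈ A, F.Finite := by
  obtain ⟨U, V, hU, hV, rfl⟩ := hA
  obtain ⟨n, hUn, hVn⟩ := Set.mem_iUnion.1 huniv
  obtain ⟨F, -, hF, hFU⟩ := exists_finite_subset_mem_of_isOpen (hU n) hUn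
  have hFV : F ∉ V n := fun hFV => hVn (isUpperSet_of_isOpen (hV n) (Set.subset_univ F) hFV)
  exact ⟨F, Set.mem_iUnion.2 ⟨n, hFU, hFV⟩, hF⟩

lemma memSigma2_setOf_finite : MemSigma2 ScottPN {X : Set ℕ | X.Finite} := by
  have hcount : {X : Set ℕ | X.Finite}.Countable := by
    simpa using Set.countable_ofPred_finite_subset (Set.countable_univ (α := ℕ))
  obtain ⟨f, hf⟩ := hcount.exists_eq_range ⟨∅, Set.finite_empty⟩
  have hfin (n : ℕ) : (f n).Finite := hf.symm.subset (Set.mem_range_self n)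
  refine ⟨fun n => {X | f n ⊆ X}, fun n => {X | ¬ X ⊆ f n},
    fun n => isOpen_setOf_subset (hfin n), fun n => isOpen_setOf_not_subset (f n), ?_⟩
  rw [hf]
  ext X
  simp only [Set.mem_range, Set.mem_iUnion, Set.mem_sdiff, Set.mem_ofPred_eq, not_not]
  exact exists_congr fun n => ⟨fun h => h ▸ ⟨subset_rfl, subset_rfl⟩,
    fun h => (h.2.antisymm h.1).symm⟩

end ScottPN

/-- The family of finite subsets of `ℕ` is in `Σ⁰₂(𝒫(ℕ))`, but its complement
(the family of infinite subsets of `ℕ`) is not in `Σ⁰₂(𝒫(ℕ))`; that is,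
`𝒫_{<ω}(ℕ)` is not in `Π⁰₂(𝒫(ℕ))`. -/
theorem finite_sets_sigma2_not_pi2 :
    MemSigma2 ScottPN {X : Set ℕ | X.Finite} ∧
    ¬ MemSigma2 ScottPN ({X : Set ℕ | X.Finite}ᶜ) := by
  refine ⟨ScottPN.memSigma2_setOf_finite, fun hinf => ?_⟩
  obtain ⟨F, hFinf, hF⟩ := ScottPN.exists_finite_mem_of_memSigma2 hinf Set.infinite_univ
  exact hFinf hF
end
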